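/- Let M = [[A, B],[C, D]] (block form, n×n blocks) be symplectic, i.e., M^T J M = J. Then the quadratic form Q(q,p) = q^T B^T q + q^T (D^T − A) p − p^T C^T p is invariant under the evolution (q', p') = (q, p)·M: Q(q', p') = Q(q, p). -/
import Mathlib

open Matrix

lemma Qform_eq (n : ℕ) (A B C D : Matrix (Fin n) (Fin n) ℝ) (q p : Fin n → ℝ) :
    (q ⬝ᵥ Bᵀ.mulVec q + q ⬝ᵥ (Dᵀ - A).mulVec p - p ⬝ᵥ Cᵀ.mulVec p) =
      ((Sum.elim q p ᵥ* fromBlocks A B C D) ᵥ* fromBlocks (0 : Matrix (Fin n) (Fin n) ℝ) (-1) 1 0)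
        ⬝ᵥ Sum.elim q p := by
  simp only [vecMul_fromBlocks, Sum.elim_comp_inl, Sum.elim_comp_inr, sumElim_dotProduct_sumElim,
    vecMul_zero, vecMul_neg, vecMul_one, add_vecMul, zero_add, add_zero, sub_mulVec,
    dotProduct_sub, add_dotProduct, neg_dotProduct, zero_dotProduct]
  rw [← dotProduct_mulVec q A p]
  rw [mulVec_transpose, mulVec_transpose, mulVec_transpose]
  rw [dotProduct_comm (p ᵥ* D) q, dotProduct_comm q (q ᵥ* B), dotProduct_comm p (p ᵥ* C)]
  ring

theorem stmt_19 (n : ℕ) (A B C D : Matrix (Fin n) (Fin n) ℝ)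
    (hsymp : (fromBlocks A B C D)ᵀ * fromBlocks 0 (-1) 1 0 * fromBlocks A B C D =
      fromBlocks 0 (-1) 1 0)
    (q p : Fin n → ℝ) :
    ((q ᵥ* A + p ᵥ* C) ⬝ᵥ Bᵀ.mulVec (q ᵥ* A + p ᵥ* C) +
        (q ᵥ* A + p ᵥ* C) ⬝ᵥ (Dᵀ - A).mulVec (q ᵥ* B + p ᵥ* D) -
        (q ᵥ* B + p ᵥ* D) ⬝ᵥ Cᵀ.mulVec (q ᵥ* B + p ᵥ* D)) =
      (q ⬝ᵥ Bᵀ.mulVec q + q ⬝ᵥ (Dᵀ - A).mulVec p - p ⬝ᵥ Cᵀ.mulVec p) := by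
  set M := fromBlocks A B C D with hM
  set Jm : Matrix (Fin n ⊕ Fin n) (Fin n ⊕ Fin n) ℝ := fromBlocks 0 (-1) 1 0 with hJ
  have hmem : M ∈ Matrix.symplecticGroup (Fin n) ℝ := by
    rw [SymplecticGroup.mem_iff']
    exact hsymp
  have h2 : M * Jm * Mᵀ = Jm := SymplecticGroup.mem_iff.mp hmem
  have key : Sum.elim (q ᵥ* A + p ᵥ* C) (q ᵥ* B + p ᵥ* D) = Sum.elim q p ᵥ* M := by
    rw [hM, vecMul_fromBlocks]; rfl
  rw [Qform_eq n A B C D q p, Qform_eq n A B C D (q ᵥ* A + p ᵥ* C) (q ᵥ* B + p ᵥ* D), key, ← hM, ← hJ]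
  rw [vecMul_vecMul, vecMul_vecMul, vecMul_vecMul, ← mulVec_transpose M, dotProduct_mulVec,
    vecMul_vecMul]
  congr 2
  rw [Matrix.mul_assoc M (M * Jm) Mᵀ, h2]
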